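/- arXiv:1207.2914 — 8 statements merged into one kernel-verified Lean document; each statement's English description precedes it below -/
import Mathlib

section
/- The determinant of the energy–momentum endomorphism Q equals (E₀² − L²)² + 8·E₀·V³ − 4·A⁴. -/
open Matrix Complex

/-- The energy–momentum endomorphism `Q` of an asymptotically anti-de Sitter
initial data set, as a 4×4 complex matrix. -/
noncomputable def QMatrix (E₀ c₁ c₂ c₃ c₁' c₂' c₃' J₁ J₂ J₃ : ℝ) :
    Matrix (Fin 4) (Fin 4) ℂ :=
  let w₁ : ℂ := (c₃' : ℂ) - I * J₃
  let w₂p : ℂ := -(c₁' : ℂ) + (J₂ : ℂ) + I * ((c₂' : ℂ) + J₁)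
  let w₂m : ℂ := -(c₁' : ℂ) - (J₂ : ℂ) - I * ((c₂' : ℂ) - J₁)
  !![(E₀ : ℂ) - c₃, (c₁ : ℂ) - I * c₂, w₁, w₂p;
     (c₁ : ℂ) + I * c₂, (E₀ : ℂ) + c₃, w₂m, -w₁;
     starRingEnd ℂ w₁, starRingEnd ℂ w₂m, (E₀ : ℂ) + c₃, -(c₁ : ℂ) + I * c₂;
     starRingEnd ℂ w₂p, -(starRingEnd ℂ w₁), -(c₁ : ℂ) - I * c₂, (E₀ : ℂ) - c₃]

theorem Matrix.det_fin_four {R : Type*} [CommRing R] (A : Matrix (Fin 4) (Fin 4) R) :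
    A.det =
      A 0 0 * (A 1 1 * (A 2 2 * A 3 3 - A 2 3 * A 3 2) - A 1 2 * (A 2 1 * A 3 3 - A 2 3 * A 3 1)
          + A 1 3 * (A 2 1 * A 3 2 - A 2 2 * A 3 1))
      - A 0 1 * (A 1 0 * (A 2 2 * A 3 3 - A 2 3 * A 3 2) - A 1 2 * (A 2 0 * A 3 3 - A 2 3 * A 3 0)
          + A 1 3 * (A 2 0 * A 3 2 - A 2 2 * A 3 0))
      + A 0 2 * (A 1 0 * (A 2 1 * A 3 3 - A 2 3 * A 3 1) - A 1 1 * (A 2 0 * A 3 3 - A 2 3 * A 3 0)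
          + A 1 3 * (A 2 0 * A 3 1 - A 2 1 * A 3 0))
      - A 0 3 * (A 1 0 * (A 2 1 * A 3 2 - A 2 2 * A 3 1) - A 1 1 * (A 2 0 * A 3 2 - A 2 2 * A 3 0)
          + A 1 2 * (A 2 0 * A 3 1 - A 2 1 * A 3 0)) := by
  rw [det_succ_row_zero, Fin.sum_univ_four]
  simp only [det_fin_three, submatrix_apply, Fin.succAbove, Fin.reduceSucc, Fin.reduceCastSucc,
    Fin.reduceLT, Fin.isValue, if_true, if_false, Fin.coe_ofNat_eq_mod]
  ring

theorem det_QMatrix_eq (E₀ : ℝ) (c c' J : Fin 3 → ℝ) :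
    (QMatrix E₀ (c 0) (c 1) (c 2) (c' 0) (c' 1) (c' 2) (J 0) (J 1) (J 2)).det =
      (((E₀ ^ 2 - (c ⬝ᵥ c + c' ⬝ᵥ c' + J ⬝ᵥ J)) ^ 2 + 8 * E₀ * (c ⬝ᵥ (c' ⨯₃ J))
        - 4 * ((c ⨯₃ c') ⬝ᵥ (c ⨯₃ c') + (c ⨯₃ J) ⬝ᵥ (c ⨯₃ J) + (c' ⨯₃ J) ⬝ᵥ (c' ⨯₃ J)) : ℝ) : ℂ) := by
  rw [det_fin_four]
  simp only [QMatrix, of_apply, cons_val', cons_val_zero, cons_val_one, cons_val, cons_val_fin_one,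
    vec3_dotProduct, cross_apply, map_sub, map_add, map_neg, map_mul, conj_ofReal, conj_I]
  push_cast
  -- `Q` is Hermitian, so once `I ^ 2 = -1` is used every term with a factor `I` cancels.
  ring_nf
  simp only [I_sq, I_pow_four]
  ring

theorem det_QMatrix_general (E₀ c₁ c₂ c₃ c₁' c₂' c₃' J₁ J₂ J₃ L A V : ℝ)
    (hL : L ^ 2 = ![c₁, c₂, c₃] ⬝ᵥ ![c₁, c₂, c₃]
      + ![c₁', c₂', c₃'] ⬝ᵥ ![c₁', c₂', c₃'] + ![J₁, J₂, J₃] ⬝ᵥ ![J₁, J₂, J₃])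
    (hA : A ^ 4 =
        (![c₁, c₂, c₃] ⨯₃ ![c₁', c₂', c₃']) ⬝ᵥ (![c₁, c₂, c₃] ⨯₃ ![c₁', c₂', c₃'])
      + (![c₁, c₂, c₃] ⨯₃ ![J₁, J₂, J₃]) ⬝ᵥ (![c₁, c₂, c₃] ⨯₃ ![J₁, J₂, J₃])
      + (![c₁', c₂', c₃'] ⨯₃ ![J₁, J₂, J₃]) ⬝ᵥ (![c₁', c₂', c₃'] ⨯₃ ![J₁, J₂, J₃]))
    (hV : V ^ 3 = ![c₁, c₂, c₃] ⬝ᵥ (![c₁', c₂', c₃'] ⨯₃ ![J₁, J₂, J₃])) :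
    (QMatrix E₀ c₁ c₂ c₃ c₁' c₂' c₃' J₁ J₂ J₃).det =
      (((E₀ ^ 2 - L ^ 2) ^ 2 + 8 * E₀ * V ^ 3 - 4 * A ^ 4 : ℝ) : ℂ) := by
  rw [hL, hA, hV]
  exact det_QMatrix_eq E₀ ![c₁, c₂, c₃] ![c₁', c₂', c₃'] ![J₁, J₂, J₃]

/-- The determinant of the energy–momentum endomorphism `Q` equals
`(E₀² − L²)² + 8·E₀·V³ − 4·A⁴`. -/
theorem det_QMatrix (E₀ c₁ c₂ c₃ c₁' c₂' c₃' J₁ J₂ J₃ L A V : ℝ)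
    (hL0 : 0 ≤ L)
    (hL : L ^ 2 = ![c₁, c₂, c₃] ⬝ᵥ ![c₁, c₂, c₃]
      + ![c₁', c₂', c₃'] ⬝ᵥ ![c₁', c₂', c₃'] + ![J₁, J₂, J₃] ⬝ᵥ ![J₁, J₂, J₃])
    (hA0 : 0 ≤ A)
    (hA : A ^ 4 =
        (![c₁, c₂, c₃] ⨯₃ ![c₁', c₂', c₃']) ⬝ᵥ (![c₁, c₂, c₃] ⨯₃ ![c₁', c₂', c₃'])
      + (![c₁, c₂, c₃] ⨯₃ ![J₁, J₂, J₃]) ⬝ᵥ (![c₁, c₂, c₃] ⨯₃ ![J₁, J₂, J₃])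
      + (![c₁', c₂', c₃'] ⨯₃ ![J₁, J₂, J₃]) ⬝ᵥ (![c₁', c₂', c₃'] ⨯₃ ![J₁, J₂, J₃]))
    (hV : V ^ 3 = ![c₁, c₂, c₃] ⬝ᵥ (![c₁', c₂', c₃'] ⨯₃ ![J₁, J₂, J₃])) :
    (QMatrix E₀ c₁ c₂ c₃ c₁' c₂' c₃' J₁ J₂ J₃).det =
      (((E₀ ^ 2 - L ^ 2) ^ 2 + 8 * E₀ * V ^ 3 - 4 * A ^ 4 : ℝ) : ℂ) :=
  det_QMatrix_general E₀ c₁ c₂ c₃ c₁' c₂' c₃' J₁ J₂ J₃ L A V hL hA hV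
end

section
/- The trace of the energy–momentum endomorphism Q equals 4·E₀, and the sum of its 2×2 principal minors (the sum over all pairs a < b of the determinant of the submatrix of Q on rows and columns {a,b}) equals 6·E₀² − 2·L². -/
open Matrix Complex

/-!
For any square matrix `A`, twice the sum of its principal 2×2 minors is `(tr A)² - tr (A²)`
(Newton's identity for the second elementary symmetric function of the eigenvalues), and for
Hermitian `A`, `tr (A²) = ∑ |A i j|²`. In `Q` every component of `c`, `c'` and `J` enters the
squared moduli of the entries with total weight 4, so `tr (Q²) = 4 E₀² + 4 L²`.
-/

section PairSums

variable {ι R : Type*} [Fintype ι] [LinearOrder ι] [CommRing R]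

theorem two_mul_sum_filter_lt_eq_sum_sum (f : ι → ι → R) (hsymm : ∀ a b, f a b = f b a)
    (hdiag : ∀ a, f a a = 0) :
    2 * ∑ p ∈ Finset.univ.filter (fun p : ι × ι => p.1 < p.2), f p.1 p.2 = ∑ a, ∑ b, f a b := by
  have hsplit : ∀ p : ι × ι, f p.1 p.2 =
      (if p.1 < p.2 then f p.1 p.2 else 0) + (if p.2 < p.1 then f p.2 p.1 else 0) := by
    rintro ⟨a, b⟩
    rcases lt_trichotomy a b with h | rfl | h
    · simp [h, h.not_gt]
    · simp [hdiag]
    · simp [h, h.not_gt, hsymm a b]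
  have hswap : ∑ p : ι × ι, (if p.2 < p.1 then f p.2 p.1 else 0) =
      ∑ p : ι × ι, (if p.1 < p.2 then f p.1 p.2 else 0) :=
    Fintype.sum_equiv (Equiv.prodComm ι ι) _ _ fun _ => rfl
  rw [← Fintype.sum_prod_type', Fintype.sum_congr _ _ hsplit, Finset.sum_add_distrib, hswap,
    Finset.sum_filter, two_mul]

namespace Matrix

theorem two_mul_sum_det_submatrix_pairs (A : Matrix ι ι R) :
    2 * ∑ p ∈ Finset.univ.filter (fun p : ι × ι => p.1 < p.2),
        (A.submatrix ![p.1, p.2] ![p.1, p.2]).det = A.trace ^ 2 - (A * A).trace := by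
  simp only [det_fin_two, submatrix_apply, cons_val_zero, cons_val_one]
  rw [two_mul_sum_filter_lt_eq_sum_sum (fun a b => A a a * A b b - A a b * A b a)
    (fun _ _ => by ring) (fun _ => by ring)]
  simp only [Finset.sum_sub_distrib, trace, diag, mul_apply, sq, Finset.sum_mul_sum]

end Matrix

end PairSums

theorem Matrix.IsHermitian.trace_mul_self_eq_sum_normSq {ι : Type*} [Fintype ι]
    {A : Matrix ι ι ℂ} (hA : A.IsHermitian) :
    (A * A).trace = ∑ i, ∑ j, (normSq (A i j) : ℂ) := by
  simp only [trace, diag, mul_apply]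
  refine Finset.sum_congr rfl fun i _ => Finset.sum_congr rfl fun j _ => ?_
  rw [← hA.apply j i]
  exact mul_conj _

section QMatrix

variable (E₀ c₁ c₂ c₃ c₁' c₂' c₃' J₁ J₂ J₃ : ℝ)

theorem QMatrix_isHermitian : (QMatrix E₀ c₁ c₂ c₃ c₁' c₂' c₃' J₁ J₂ J₃).IsHermitian := by
  ext i j
  fin_cases i <;> fin_cases j <;> simp [QMatrix, conjTranspose_apply] <;> ring

theorem trace_QMatrix : (QMatrix E₀ c₁ c₂ c₃ c₁' c₂' c₃' J₁ J₂ J₃).trace = 4 * E₀ := by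
  simp [QMatrix, trace, Fin.sum_univ_four]
  ring

theorem sum_normSq_QMatrix :
    ∑ i, ∑ j, normSq (QMatrix E₀ c₁ c₂ c₃ c₁' c₂' c₃' J₁ J₂ J₃ i j) =
      4 * E₀ ^ 2 + 4 * (![c₁, c₂, c₃] ⬝ᵥ ![c₁, c₂, c₃] + ![c₁', c₂', c₃'] ⬝ᵥ ![c₁', c₂', c₃']
        + ![J₁, J₂, J₃] ⬝ᵥ ![J₁, J₂, J₃]) := by
  simp [QMatrix, Fin.sum_univ_four, dotProduct, Fin.sum_univ_three, normSq_apply]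
  ring

end QMatrix

theorem trace_and_second_minors_QMatrix_general (E₀ c₁ c₂ c₃ c₁' c₂' c₃' J₁ J₂ J₃ L : ℝ)
    (hL : L ^ 2 = ![c₁, c₂, c₃] ⬝ᵥ ![c₁, c₂, c₃]
      + ![c₁', c₂', c₃'] ⬝ᵥ ![c₁', c₂', c₃'] + ![J₁, J₂, J₃] ⬝ᵥ ![J₁, J₂, J₃]) :
    (QMatrix E₀ c₁ c₂ c₃ c₁' c₂' c₃' J₁ J₂ J₃).trace = ((4 * E₀ : ℝ) : ℂ) ∧
    ∑ p ∈ Finset.univ.filter (fun p : Fin 4 × Fin 4 => p.1 < p.2),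
        ((QMatrix E₀ c₁ c₂ c₃ c₁' c₂' c₃' J₁ J₂ J₃).submatrix ![p.1, p.2] ![p.1, p.2]).det
      = ((6 * E₀ ^ 2 - 2 * L ^ 2 : ℝ) : ℂ) := by
  set Q := QMatrix E₀ c₁ c₂ c₃ c₁' c₂' c₃' J₁ J₂ J₃
  have htrace : Q.trace = 4 * E₀ := trace_QMatrix ..
  have htrace_sq : (Q * Q).trace = 4 * E₀ ^ 2 + 4 * L ^ 2 := by
    rw [(QMatrix_isHermitian ..).trace_mul_self_eq_sum_normSq]
    exact_mod_cast (sum_normSq_QMatrix ..).trans (by rw [hL])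
  have hminors := two_mul_sum_det_submatrix_pairs Q
  rw [htrace, htrace_sq] at hminors
  constructor
  · push_cast
    exact htrace
  · push_cast
    linear_combination hminors / 2

/-- The trace of the energy–momentum endomorphism `Q` equals `4·E₀`, and the
sum of its 2×2 principal minors equals `6·E₀² − 2·L²`. -/
theorem trace_and_second_minors_QMatrix (E₀ c₁ c₂ c₃ c₁' c₂' c₃' J₁ J₂ J₃ L : ℝ)
    (hL0 : 0 ≤ L)
    (hL : L ^ 2 = ![c₁, c₂, c₃] ⬝ᵥ ![c₁, c₂, c₃]
      + ![c₁', c₂', c₃'] ⬝ᵥ ![c₁', c₂', c₃'] + ![J₁, J₂, J₃] ⬝ᵥ ![J₁, J₂, J₃]) :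
    (QMatrix E₀ c₁ c₂ c₃ c₁' c₂' c₃' J₁ J₂ J₃).trace = ((4 * E₀ : ℝ) : ℂ) ∧
    ∑ p ∈ Finset.univ.filter (fun p : Fin 4 × Fin 4 => p.1 < p.2),
        ((QMatrix E₀ c₁ c₂ c₃ c₁' c₂' c₃' J₁ J₂ J₃).submatrix ![p.1, p.2] ![p.1, p.2]).det
      = ((6 * E₀ ^ 2 - 2 * L ^ 2 : ℝ) : ℂ) :=
  trace_and_second_minors_QMatrix_general E₀ c₁ c₂ c₃ c₁' c₂' c₃' J₁ J₂ J₃ L hL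
end

section
/- The sum of the 3×3 principal minors of the energy–momentum endomorphism Q (the sum over all three-element subsets S of the index set of the determinant of the submatrix of Q on rows and columns S) equals 4·E₀·(E₀² − L²) + 8·V³. -/
open Matrix Complex

theorem Finset.sum_filter_lt_lt_fin_four {M : Type*} [AddCommMonoid M]
    (f : Fin 4 × Fin 4 × Fin 4 → M) :
    ∑ p ∈ Finset.univ.filter
        (fun p : Fin 4 × Fin 4 × Fin 4 => p.1 < p.2.1 ∧ p.2.1 < p.2.2), f p
      = f (0, 1, 2) + f (0, 1, 3) + f (0, 2, 3) + f (1, 2, 3) := by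
  rw [show Finset.univ.filter
      (fun p : Fin 4 × Fin 4 × Fin 4 => p.1 < p.2.1 ∧ p.2.1 < p.2.2) =
      {(0, 1, 2), (0, 1, 3), (0, 2, 3), (1, 2, 3)} from by decide]
  simp [add_assoc]

theorem sum_principal_minors_three_QMatrix (E₀ c₁ c₂ c₃ c₁' c₂' c₃' J₁ J₂ J₃ : ℝ) :
    ∑ p ∈ Finset.univ.filter
        (fun p : Fin 4 × Fin 4 × Fin 4 => p.1 < p.2.1 ∧ p.2.1 < p.2.2),
        ((QMatrix E₀ c₁ c₂ c₃ c₁' c₂' c₃' J₁ J₂ J₃).submatrix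
          ![p.1, p.2.1, p.2.2] ![p.1, p.2.1, p.2.2]).det
      = ((4 * E₀ * (E₀ ^ 2 - (![c₁, c₂, c₃] ⬝ᵥ ![c₁, c₂, c₃]
          + ![c₁', c₂', c₃'] ⬝ᵥ ![c₁', c₂', c₃'] + ![J₁, J₂, J₃] ⬝ᵥ ![J₁, J₂, J₃]))
          + 8 * (![c₁, c₂, c₃] ⬝ᵥ (![c₁', c₂', c₃'] ⨯₃ ![J₁, J₂, J₃])) : ℝ) : ℂ) := by
  rw [Finset.sum_filter_lt_lt_fin_four]
  simp only [det_fin_three, dotProduct, cross_apply, Fin.sum_univ_three]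
  -- `-ofReal_pow` keeps the right side a cast of a real, so `simp` reads off its re and im parts.
  apply Complex.ext <;> simp [QMatrix, -ofReal_pow] <;> ring

theorem third_minors_QMatrix_general (E₀ c₁ c₂ c₃ c₁' c₂' c₃' J₁ J₂ J₃ L V : ℝ)
    (hL : L ^ 2 = ![c₁, c₂, c₃] ⬝ᵥ ![c₁, c₂, c₃]
      + ![c₁', c₂', c₃'] ⬝ᵥ ![c₁', c₂', c₃'] + ![J₁, J₂, J₃] ⬝ᵥ ![J₁, J₂, J₃])
    (hV : V ^ 3 = ![c₁, c₂, c₃] ⬝ᵥ (![c₁', c₂', c₃'] ⨯₃ ![J₁, J₂, J₃])) :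
    ∑ p ∈ Finset.univ.filter
        (fun p : Fin 4 × Fin 4 × Fin 4 => p.1 < p.2.1 ∧ p.2.1 < p.2.2),
        ((QMatrix E₀ c₁ c₂ c₃ c₁' c₂' c₃' J₁ J₂ J₃).submatrix
          ![p.1, p.2.1, p.2.2] ![p.1, p.2.1, p.2.2]).det
      = ((4 * E₀ * (E₀ ^ 2 - L ^ 2) + 8 * V ^ 3 : ℝ) : ℂ) := by
  rw [sum_principal_minors_three_QMatrix, hL, hV]

/-- The sum of the 3×3 principal minors of the energy–momentum endomorphism `Q`
equals `4·E₀·(E₀² − L²) + 8·V³`. -/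
theorem third_minors_QMatrix (E₀ c₁ c₂ c₃ c₁' c₂' c₃' J₁ J₂ J₃ L V : ℝ)
    (hL0 : 0 ≤ L)
    (hL : L ^ 2 = ![c₁, c₂, c₃] ⬝ᵥ ![c₁, c₂, c₃]
      + ![c₁', c₂', c₃'] ⬝ᵥ ![c₁', c₂', c₃'] + ![J₁, J₂, J₃] ⬝ᵥ ![J₁, J₂, J₃])
    (hV : V ^ 3 = ![c₁, c₂, c₃] ⬝ᵥ (![c₁', c₂', c₃'] ⨯₃ ![J₁, J₂, J₃])) :
    ∑ p ∈ Finset.univ.filter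
        (fun p : Fin 4 × Fin 4 × Fin 4 => p.1 < p.2.1 ∧ p.2.1 < p.2.2),
        ((QMatrix E₀ c₁ c₂ c₃ c₁' c₂' c₃' J₁ J₂ J₃).submatrix
          ![p.1, p.2.1, p.2.2] ![p.1, p.2.1, p.2.2]).det
      = ((4 * E₀ * (E₀ ^ 2 - L ^ 2) + 8 * V ^ 3 : ℝ) : ℂ) :=
  third_minors_QMatrix_general E₀ c₁ c₂ c₃ c₁' c₂' c₃' J₁ J₂ J₃ L V hL hV
end

section
/- If the energy–momentum endomorphism Q is positive semidefinite (i.e. ⟨λ, Qλ⟩ ≥ 0 for every λ ∈ ℂ⁴), then 3·E₀² ≥ L², i.e. E₀² ≥ (|c|² + |c'|² + |J|²)/3. -/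
/-! The 2×2 principal minors of a positive semidefinite matrix are nonnegative, so
`|Q i j|² ≤ Q i i · Q j j`. For the minors on the index pairs (0,1), (0,2), (0,3), (1,2) of `Q`,
the first two give `c₁² + c₂² + c₃'² + J₃² ≤ 2(E₀² - c₃²)` and half the sum of the last two gives
`c₁'² + c₂'² + J₁² + J₂² ≤ E₀² + c₃²`; adding them, `c₃²` cancels and `|c|² + |c'|² + |J|² ≤ 3E₀²`. -/

open Matrix Complex ComplexOrder

theorem Matrix.PosSemidef.sq_norm_apply_le {n 𝕜 : Type*} [Fintype n] [RCLike 𝕜]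
    {A : Matrix n n 𝕜} (hA : A.PosSemidef) (i j : n) :
    ‖A i j‖ ^ 2 ≤ RCLike.re (A i i) * RCLike.re (A j j) := by
  have hminor := (RCLike.nonneg_iff.mp (hA.submatrix ![i, j]).det_nonneg).1
  have hji : A j i = star (A i j) := by rw [← hA.isHermitian.apply j i]
  have hii := (RCLike.nonneg_iff.mp (hA.diag_nonneg (i := i))).2
  have hjj := (RCLike.nonneg_iff.mp (hA.diag_nonneg (i := j))).2
  simp only [det_fin_two, submatrix_apply, cons_val_zero, cons_val_one, hji,
    RCLike.star_def, RCLike.mul_conj] at hminor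
  rw [map_sub, RCLike.mul_re, hii, hjj, mul_zero, sub_zero, ← RCLike.ofReal_pow,
    RCLike.ofReal_re] at hminor
  linarith

theorem E0_sq_ge_L_sq_div_three_of_posSemidef_general
    (E₀ c₁ c₂ c₃ c₁' c₂' c₃' J₁ J₂ J₃ : ℝ)
    (hQ : (QMatrix E₀ c₁ c₂ c₃ c₁' c₂' c₃' J₁ J₂ J₃).PosSemidef) :
    E₀ ^ 2 ≥ (![c₁, c₂, c₃] ⬝ᵥ ![c₁, c₂, c₃]
      + ![c₁', c₂', c₃'] ⬝ᵥ ![c₁', c₂', c₃'] + ![J₁, J₂, J₃] ⬝ᵥ ![J₁, J₂, J₃]) / 3 := by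
  have h01 := hQ.sq_norm_apply_le 0 1
  have h02 := hQ.sq_norm_apply_le 0 2
  have h03 := hQ.sq_norm_apply_le 0 3
  have h12 := hQ.sq_norm_apply_le 1 2
  simp only [QMatrix, neg_sub, map_sub, conj_ofReal, map_mul, conj_I, neg_mul, sub_neg_eq_add,
    map_neg, map_add, neg_add_rev, Fin.isValue, of_apply, cons_val', cons_val_one, cons_val_zero,
    cons_val_fin_one, Complex.sq_norm, normSq_apply, sub_re, ofReal_re, mul_re, I_re, zero_mul,
    I_im, ofReal_im, mul_zero, sub_self, sub_zero, sub_im, mul_im, one_mul, zero_add, zero_sub,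
    mul_neg, neg_neg, RCLike.re_to_complex, add_re, cons_val, neg_re, add_im, add_zero, neg_im,
    neg_zero] at h01 h02 h03 h12
  simp only [dotProduct, Fin.sum_univ_three, cons_val_zero, cons_val_one, cons_val_two,
    head_cons, tail_cons]
  linear_combination (h01 + h02 + (h03 + h12) / 2) / 3

/-- If the energy–momentum endomorphism `Q` is positive semidefinite, then
`3·E₀² ≥ L²`, i.e. `E₀² ≥ (|c|² + |c'|² + |J|²)/3`. -/
theorem E0_sq_ge_L_sq_div_three_of_posSemidef
    (E₀ c₁ c₂ c₃ c₁' c₂' c₃' J₁ J₂ J₃ L : ℝ)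
    (hL0 : 0 ≤ L)
    (hL : L ^ 2 = ![c₁, c₂, c₃] ⬝ᵥ ![c₁, c₂, c₃]
      + ![c₁', c₂', c₃'] ⬝ᵥ ![c₁', c₂', c₃'] + ![J₁, J₂, J₃] ⬝ᵥ ![J₁, J₂, J₃])
    (hQ : (QMatrix E₀ c₁ c₂ c₃ c₁' c₂' c₃' J₁ J₂ J₃).PosSemidef) :
    E₀ ^ 2 ≥ (![c₁, c₂, c₃] ⬝ᵥ ![c₁, c₂, c₃]
      + ![c₁', c₂', c₃'] ⬝ᵥ ![c₁', c₂', c₃'] + ![J₁, J₂, J₃] ⬝ᵥ ![J₁, J₂, J₃]) / 3 :=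
  E0_sq_ge_L_sq_div_three_of_posSemidef_general E₀ c₁ c₂ c₃ c₁' c₂' c₃' J₁ J₂ J₃ hQ
end

section
/- If the energy–momentum endomorphism Q is positive semidefinite (i.e. ⟨λ, Qλ⟩ ≥ 0 for every λ ∈ ℂ⁴), then E₀·(E₀² − L²) + 2·V³ ≥ 0. -/
open Matrix Complex ComplexOrder

/-!
The principal 3×3 minors of a positive semidefinite matrix are nonnegative. For `Q`, the
minors on the rows and columns `{0, 1, 2}` and `{0, 1, 3}` add up to
`2 (E₀ (E₀² − L²) + 2 c·(c' × J))`, which gives the inequality.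
-/

theorem Matrix.PosSemidef.re_det_submatrix_nonneg {m n : Type*} [Fintype m] [DecidableEq m]
    [Fintype n] {A : Matrix n n ℂ} (hA : A.PosSemidef) (e : m → n) :
    0 ≤ (A.submatrix e e).det.re :=
  (Complex.nonneg_iff.mp (hA.submatrix e).det_nonneg).1

theorem QMatrix_det_submatrix_add (E₀ c₁ c₂ c₃ c₁' c₂' c₃' J₁ J₂ J₃ : ℝ) :
    let Q := QMatrix E₀ c₁ c₂ c₃ c₁' c₂' c₃' J₁ J₂ J₃
    (Q.submatrix ![0, 1, 2] ![0, 1, 2]).det + (Q.submatrix ![0, 1, 3] ![0, 1, 3]).det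
      = ((2 * (E₀ * (E₀ ^ 2 - (![c₁, c₂, c₃] ⬝ᵥ ![c₁, c₂, c₃]
          + ![c₁', c₂', c₃'] ⬝ᵥ ![c₁', c₂', c₃'] + ![J₁, J₂, J₃] ⬝ᵥ ![J₁, J₂, J₃]))
          + 2 * ![c₁, c₂, c₃] ⬝ᵥ (![c₁', c₂', c₃'] ⨯₃ ![J₁, J₂, J₃])) : ℝ) : ℂ) := by
  simp only [QMatrix, det_fin_three, submatrix_apply, of_apply, dotProduct,
    Fin.sum_univ_three, cross_apply]
  apply Complex.ext <;> simp [-Complex.ofReal_pow] <;> ring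

theorem third_minor_nonneg_of_posSemidef_general
    (E₀ c₁ c₂ c₃ c₁' c₂' c₃' J₁ J₂ J₃ L V : ℝ)
    (hL : L ^ 2 = ![c₁, c₂, c₃] ⬝ᵥ ![c₁, c₂, c₃]
      + ![c₁', c₂', c₃'] ⬝ᵥ ![c₁', c₂', c₃'] + ![J₁, J₂, J₃] ⬝ᵥ ![J₁, J₂, J₃])
    (hV : V ^ 3 = ![c₁, c₂, c₃] ⬝ᵥ (![c₁', c₂', c₃'] ⨯₃ ![J₁, J₂, J₃]))
    (hQ : (QMatrix E₀ c₁ c₂ c₃ c₁' c₂' c₃' J₁ J₂ J₃).PosSemidef) :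
    E₀ * (E₀ ^ 2 - L ^ 2) + 2 * V ^ 3 ≥ 0 := by
  have h₁ := hQ.re_det_submatrix_nonneg ![0, 1, 2]
  have h₂ := hQ.re_det_submatrix_nonneg ![0, 1, 3]
  have hsum := congrArg Complex.re (QMatrix_det_submatrix_add E₀ c₁ c₂ c₃ c₁' c₂' c₃' J₁ J₂ J₃)
  rw [Complex.add_re, Complex.ofReal_re, ← hL, ← hV] at hsum
  linarith

/-- If the energy–momentum endomorphism `Q` is positive semidefinite, then
`E₀·(E₀² − L²) + 2·V³ ≥ 0`. -/
theorem third_minor_nonneg_of_posSemidef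
    (E₀ c₁ c₂ c₃ c₁' c₂' c₃' J₁ J₂ J₃ L V : ℝ)
    (hL0 : 0 ≤ L)
    (hL : L ^ 2 = ![c₁, c₂, c₃] ⬝ᵥ ![c₁, c₂, c₃]
      + ![c₁', c₂', c₃'] ⬝ᵥ ![c₁', c₂', c₃'] + ![J₁, J₂, J₃] ⬝ᵥ ![J₁, J₂, J₃])
    (hV : V ^ 3 = ![c₁, c₂, c₃] ⬝ᵥ (![c₁', c₂', c₃'] ⨯₃ ![J₁, J₂, J₃]))
    (hQ : (QMatrix E₀ c₁ c₂ c₃ c₁' c₂' c₃' J₁ J₂ J₃).PosSemidef) :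
    E₀ * (E₀ ^ 2 - L ^ 2) + 2 * V ^ 3 ≥ 0 :=
  third_minor_nonneg_of_posSemidef_general E₀ c₁ c₂ c₃ c₁' c₂' c₃' J₁ J₂ J₃ L V hL hV hQ
end

section
/- If the energy–momentum endomorphism Q is positive semidefinite (i.e. ⟨λ, Qλ⟩ ≥ 0 for every λ ∈ ℂ⁴), then E₀² ≥ L² − 2·V². -/
/-!
The eigenvalues of the positive semidefinite matrix `Q` are nonnegative, hence so are their
elementary symmetric functions `e₂` and `e₃`. Newton's identities express these through the
power sums `tr Q = 4E₀`, `tr Q² = 4E₀² + 4L²` and `tr Q³ = 4E₀³ + 12E₀L² + 24V³`, giving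
`L² ≤ 3E₀²` and `E₀³ - E₀L² + 2V³ ≥ 0`. If `V ≥ E₀` the first bound already gives the claim;
otherwise `E₀(E₀² - L² + 2V²) = (E₀³ - E₀L² + 2V³) + 2V²(E₀ - V) ≥ 0`.
-/

open Matrix Complex ComplexOrder

/-- The left-hand side is `6 e₃(x)`; inserting a point `t` increases it by
`3 t ((∑ x)² - ∑ x²) ≥ 0`. -/
lemma Finset.newton_esymm_three_nonneg {ι : Type*} (s : Finset ι) {x : ι → ℝ}
    (hx : ∀ i ∈ s, 0 ≤ x i) :
    0 ≤ (∑ i ∈ s, x i) ^ 3 - 3 * (∑ i ∈ s, x i) * (∑ i ∈ s, x i ^ 2)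
      + 2 * ∑ i ∈ s, x i ^ 3 := by
  classical
  induction s using Finset.induction_on with
  | empty => simp
  | insert a s ha ih =>
    have hxs : ∀ i ∈ s, 0 ≤ x i := fun i hi ↦ hx i (mem_insert_of_mem hi)
    have hxa : 0 ≤ x a := hx a (mem_insert_self a s)
    have hsq := sum_sq_le_sq_sum_of_nonneg hxs
    simp only [sum_insert ha]
    nlinarith [ih hxs, mul_nonneg hxa (sub_nonneg.2 hsq)]

section Trace

variable {𝕜 n : Type*} [RCLike 𝕜] [Fintype n] [DecidableEq n] {A : Matrix n n 𝕜}

lemma Matrix.IsHermitian.re_trace_pow_eq_sum (hA : A.IsHermitian) (k : ℕ) :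
    RCLike.re (A ^ k).trace = ∑ i, hA.eigenvalues i ^ k := by
  have htrace : (A ^ k).trace = ∑ i, (hA.eigenvalues i : 𝕜) ^ k := by
    conv_lhs => rw [hA.spectral_theorem, ← map_pow, Unitary.conjStarAlgAut_apply,
      trace_mul_cycle, Unitary.coe_star_mul_self, one_mul, diagonal_pow, trace_diagonal]
    rfl
  rw [htrace, map_sum]
  simp_rw [← RCLike.ofReal_pow, RCLike.ofReal_re]

lemma Matrix.IsHermitian.re_trace_eq_sum (hA : A.IsHermitian) :
    RCLike.re A.trace = ∑ i, hA.eigenvalues i := by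
  simpa using hA.re_trace_pow_eq_sum 1

namespace Matrix.PosSemidef

lemma re_trace_nonneg (hA : A.PosSemidef) : 0 ≤ RCLike.re A.trace := by
  simpa [hA.1.re_trace_eq_sum] using Finset.sum_nonneg fun i _ ↦ hA.eigenvalues_nonneg i

lemma re_trace_sq_le (hA : A.PosSemidef) : RCLike.re (A ^ 2).trace ≤ RCLike.re A.trace ^ 2 := by
  simpa [hA.1.re_trace_eq_sum, hA.1.re_trace_pow_eq_sum] using
    Finset.sum_sq_le_sq_sum_of_nonneg fun i _ ↦ hA.eigenvalues_nonneg i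

lemma newton_esymm_three_nonneg (hA : A.PosSemidef) :
    0 ≤ RCLike.re A.trace ^ 3 - 3 * RCLike.re A.trace * RCLike.re (A ^ 2).trace
      + 2 * RCLike.re (A ^ 3).trace := by
  simpa [hA.1.re_trace_eq_sum, hA.1.re_trace_pow_eq_sum] using
    Finset.univ.newton_esymm_three_nonneg fun i _ ↦ hA.eigenvalues_nonneg i

end Matrix.PosSemidef

end Trace

section QMatrix

variable (E₀ c₁ c₂ c₃ c₁' c₂' c₃' J₁ J₂ J₃ : ℝ)

lemma re_trace_QMatrix : (QMatrix E₀ c₁ c₂ c₃ c₁' c₂' c₃' J₁ J₂ J₃).trace.re = 4 * E₀ := by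
  simp [QMatrix, trace, Fin.sum_univ_four]
  ring

lemma re_trace_QMatrix_sq : ((QMatrix E₀ c₁ c₂ c₃ c₁' c₂' c₃' J₁ J₂ J₃) ^ 2).trace.re =
    4 * E₀ ^ 2 + 4 * (![c₁, c₂, c₃] ⬝ᵥ ![c₁, c₂, c₃]
      + ![c₁', c₂', c₃'] ⬝ᵥ ![c₁', c₂', c₃'] + ![J₁, J₂, J₃] ⬝ᵥ ![J₁, J₂, J₃]) := by
  simp [QMatrix, trace, sq, Fin.sum_univ_four, dotProduct, Fin.sum_univ_three]
  ring

lemma re_trace_QMatrix_cube : ((QMatrix E₀ c₁ c₂ c₃ c₁' c₂' c₃' J₁ J₂ J₃) ^ 3).trace.re =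
    4 * E₀ ^ 3 + 12 * E₀ * (![c₁, c₂, c₃] ⬝ᵥ ![c₁, c₂, c₃]
      + ![c₁', c₂', c₃'] ⬝ᵥ ![c₁', c₂', c₃'] + ![J₁, J₂, J₃] ⬝ᵥ ![J₁, J₂, J₃])
      + 24 * ![c₁, c₂, c₃] ⬝ᵥ (![c₁', c₂', c₃'] ⨯₃ ![J₁, J₂, J₃]) := by
  simp [QMatrix, trace, pow_succ, Fin.sum_univ_four, dotProduct, Fin.sum_univ_three, crossProduct]
  ring

end QMatrix

lemma sub_two_mul_sq_le_sq {E S V : ℝ} (hE : 0 ≤ E) (h₂ : S ≤ 3 * E ^ 2)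
    (h₃ : 0 ≤ E ^ 3 - E * S + 2 * V ^ 3) : S - 2 * V ^ 2 ≤ E ^ 2 := by
  rcases le_total E V with hEV | hVE
  · nlinarith [mul_le_mul hEV hEV hE (hE.trans hEV)]
  rcases hE.eq_or_lt with rfl | hEpos
  · linarith [sq_nonneg V]
  have hprod : 0 ≤ E * (E ^ 2 - S + 2 * V ^ 2) := by
    nlinarith [mul_nonneg (sq_nonneg V) (sub_nonneg.2 hVE)]
  linarith [(mul_nonneg_iff_of_pos_left hEpos).1 hprod]

theorem E0_sq_ge_of_posSemidef_general
    (E₀ c₁ c₂ c₃ c₁' c₂' c₃' J₁ J₂ J₃ L V : ℝ)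
    (hL : L ^ 2 = ![c₁, c₂, c₃] ⬝ᵥ ![c₁, c₂, c₃]
      + ![c₁', c₂', c₃'] ⬝ᵥ ![c₁', c₂', c₃'] + ![J₁, J₂, J₃] ⬝ᵥ ![J₁, J₂, J₃])
    (hV : V ^ 3 = ![c₁, c₂, c₃] ⬝ᵥ (![c₁', c₂', c₃'] ⨯₃ ![J₁, J₂, J₃]))
    (hQ : (QMatrix E₀ c₁ c₂ c₃ c₁' c₂' c₃' J₁ J₂ J₃).PosSemidef) :
    E₀ ^ 2 ≥ L ^ 2 - 2 * V ^ 2 := by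
  have h₁ := hQ.re_trace_nonneg
  have h₂ := hQ.re_trace_sq_le
  have h₃ := hQ.newton_esymm_three_nonneg
  simp only [RCLike.re_to_complex, re_trace_QMatrix, re_trace_QMatrix_sq, re_trace_QMatrix_cube,
    ← hL, ← hV] at h₁ h₂ h₃
  exact sub_two_mul_sq_le_sq (by linarith) (by linarith) (by linarith)

/-- If the energy–momentum endomorphism `Q` is positive semidefinite, then
`E₀² ≥ L² − 2·V²`. -/
theorem E0_sq_ge_of_posSemidef
    (E₀ c₁ c₂ c₃ c₁' c₂' c₃' J₁ J₂ J₃ L V : ℝ)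
    (hL0 : 0 ≤ L)
    (hL : L ^ 2 = ![c₁, c₂, c₃] ⬝ᵥ ![c₁, c₂, c₃]
      + ![c₁', c₂', c₃'] ⬝ᵥ ![c₁', c₂', c₃'] + ![J₁, J₂, J₃] ⬝ᵥ ![J₁, J₂, J₃])
    (hV : V ^ 3 = ![c₁, c₂, c₃] ⬝ᵥ (![c₁', c₂', c₃'] ⨯₃ ![J₁, J₂, J₃]))
    (hQ : (QMatrix E₀ c₁ c₂ c₃ c₁' c₂' c₃' J₁ J₂ J₃).PosSemidef) :
    E₀ ^ 2 ≥ L ^ 2 - 2 * V ^ 2 :=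
  E0_sq_ge_of_posSemidef_general E₀ c₁ c₂ c₃ c₁' c₂' c₃' J₁ J₂ J₃ L V hL hV hQ
end

section
/- If the energy–momentum endomorphism Q is positive semidefinite (i.e. ⟨λ, Qλ⟩ ≥ 0 for every λ ∈ ℂ⁴), then E₀ ≥ √( L² − 2·V² + 2·√( max{A⁴ − L²·V², 0} ) ). (This is the energy-momentum inequality of the positive energy theorem for asymptotically anti-de Sitter spacetimes, in terms of the positive semidefiniteness of Q established via Witten's spinor argument.) -/
/-!
Write `Q = E₀ + M` with `M` traceless, so that `det (t + M) = f t` for the quartic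
`f t = t⁴ - 2L²t² + 8V³t + L⁴ - 4A⁴`. The sums of the principal minors of `Q` of each size are
`f'''(E₀)/6`, `f''(E₀)/2`, `f'(E₀)` and `f(E₀)`; they are nonnegative when `Q` is positive
semidefinite. Completing the square,
`f t = (t² - L² + 2V²)² - 4V²(t - V)² - 4(A⁴ - L²V²)`,
so `f(E₀) ≥ 0` yields the bound as soon as `E₀² - L² + 2V² ≥ 0`, and this follows from the
three lower-order inequalities.
-/

open Matrix Complex ComplexOrder

namespace Matrix.PosSemidef

variable {n 𝕜 : Type*} [RCLike 𝕜]

theorem sum_det_submatrix_pair_nonneg [Fintype n] {M : Matrix n n 𝕜} (hM : M.PosSemidef) :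
    0 ≤ ∑ i, ∑ j, (M.submatrix ![i, j] ![i, j]).det :=
  Finset.sum_nonneg fun _ _ ↦ Finset.sum_nonneg fun _ _ ↦ (hM.submatrix _).det_nonneg

theorem sum_det_submatrix_succAbove_nonneg {k : ℕ} {M : Matrix (Fin (k + 1)) (Fin (k + 1)) 𝕜}
    (hM : M.PosSemidef) : 0 ≤ ∑ i : Fin (k + 1), (M.submatrix i.succAbove i.succAbove).det :=
  Finset.sum_nonneg fun _ _ ↦ (hM.submatrix _).det_nonneg

end Matrix.PosSemidef

section QMatrix

variable (E₀ : ℝ) (c c' J : Fin 3 → ℝ)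

theorem trace_QMatrix_s12 :
    (QMatrix E₀ (c 0) (c 1) (c 2) (c' 0) (c' 1) (c' 2) (J 0) (J 1) (J 2)).trace =
      (4 * E₀ : ℝ) := by
  simp [QMatrix, trace, Fin.sum_univ_four]
  ring

/-- Summed over ordered pairs, so the diagonal terms vanish and each `2 × 2` principal minor is
counted twice. -/
theorem sum_det_submatrix_pair_QMatrix :
    ∑ i, ∑ j, ((QMatrix E₀ (c 0) (c 1) (c 2) (c' 0) (c' 1) (c' 2) (J 0) (J 1) (J 2)).submatrix
      ![i, j] ![i, j]).det = (12 * E₀ ^ 2 - 4 * (c ⬝ᵥ c + c' ⬝ᵥ c' + J ⬝ᵥ J) : ℝ) := by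
  simp only [Fin.sum_univ_four, det_fin_two, submatrix_apply]
  simp [QMatrix, dotProduct, Fin.sum_univ_three]
  ring_nf
  simp only [I_sq]
  ring

theorem sum_det_submatrix_succAbove_QMatrix :
    ∑ i : Fin 4, ((QMatrix E₀ (c 0) (c 1) (c 2) (c' 0) (c' 1) (c' 2) (J 0) (J 1) (J 2)).submatrix
      i.succAbove i.succAbove).det =
      (4 * E₀ ^ 3 - 4 * (c ⬝ᵥ c + c' ⬝ᵥ c' + J ⬝ᵥ J) * E₀ + 8 * c ⬝ᵥ (c' ⨯₃ J) : ℝ) := by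
  simp only [Fin.sum_univ_four, det_fin_three, submatrix_apply]
  simp [QMatrix, dotProduct, Fin.sum_univ_three, cross_apply, Fin.succAbove]
  ring_nf
  simp only [I_sq]
  ring

theorem det_QMatrix_s12 :
    (QMatrix E₀ (c 0) (c 1) (c 2) (c' 0) (c' 1) (c' 2) (J 0) (J 1) (J 2)).det =
      (E₀ ^ 4 - 2 * (c ⬝ᵥ c + c' ⬝ᵥ c' + J ⬝ᵥ J) * E₀ ^ 2 + 8 * c ⬝ᵥ (c' ⨯₃ J) * E₀
        + (c ⬝ᵥ c + c' ⬝ᵥ c' + J ⬝ᵥ J) ^ 2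
        - 4 * ((c ⨯₃ c') ⬝ᵥ (c ⨯₃ c') + (c ⨯₃ J) ⬝ᵥ (c ⨯₃ J) + (c' ⨯₃ J) ⬝ᵥ (c' ⨯₃ J)) : ℝ) := by
  simp only [det_succ_row_zero, Fin.sum_univ_succ, submatrix_apply]
  simp [QMatrix, dotProduct, Fin.sum_univ_three, cross_apply, Fin.succAbove]
  ring_nf
  simp only [I_sq, I_pow_four]
  ring

theorem nonneg_of_posSemidef_QMatrix
    (hQ : (QMatrix E₀ (c 0) (c 1) (c 2) (c' 0) (c' 1) (c' 2) (J 0) (J 1) (J 2)).PosSemidef) :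
    0 ≤ E₀ ∧ c ⬝ᵥ c + c' ⬝ᵥ c' + J ⬝ᵥ J ≤ 3 * E₀ ^ 2 ∧
      0 ≤ E₀ ^ 3 - (c ⬝ᵥ c + c' ⬝ᵥ c' + J ⬝ᵥ J) * E₀ + 2 * c ⬝ᵥ (c' ⨯₃ J) ∧
      0 ≤ E₀ ^ 4 - 2 * (c ⬝ᵥ c + c' ⬝ᵥ c' + J ⬝ᵥ J) * E₀ ^ 2 + 8 * c ⬝ᵥ (c' ⨯₃ J) * E₀
        + (c ⬝ᵥ c + c' ⬝ᵥ c' + J ⬝ᵥ J) ^ 2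
        - 4 * ((c ⨯₃ c') ⬝ᵥ (c ⨯₃ c') + (c ⨯₃ J) ⬝ᵥ (c ⨯₃ J) + (c' ⨯₃ J) ⬝ᵥ (c' ⨯₃ J)) := by
  have h₁ := hQ.trace_nonneg
  have h₂ := hQ.sum_det_submatrix_pair_nonneg
  have h₃ := hQ.sum_det_submatrix_succAbove_nonneg
  have h₄ := hQ.det_nonneg
  rw [trace_QMatrix_s12, zero_le_real] at h₁
  rw [sum_det_submatrix_pair_QMatrix, zero_le_real] at h₂
  rw [sum_det_submatrix_succAbove_QMatrix, zero_le_real] at h₃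
  rw [det_QMatrix_s12, zero_le_real] at h₄
  exact ⟨by linarith, by linarith, by linarith, h₄⟩

end QMatrix

section Quartic

variable {E L A V : ℝ}

theorem sq_le_sq_add_two_mul_sq (hE : 0 ≤ E) (h₂ : L ^ 2 ≤ 3 * E ^ 2)
    (h₃ : 0 ≤ E ^ 3 - L ^ 2 * E + 2 * V ^ 3) : L ^ 2 ≤ E ^ 2 + 2 * V ^ 2 := by
  -- Otherwise `|V| < E` and `E³ - L²E + 2V³ = -E (L² - E² - 2V²) + 2V² (V - E) < 0`.
  by_contra! h
  have hV : |V| < E := abs_lt_of_sq_lt_sq (by linarith) hE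
  have hE_pos : 0 < E := (abs_nonneg V).trans_lt hV
  have hV_le : V ≤ E := (le_abs_self V).trans hV.le
  nlinarith [mul_pos hE_pos (sub_pos.2 h), mul_nonneg (sq_nonneg V) (sub_nonneg.2 hV_le)]

theorem sqrt_le_of_quartic_derivatives_nonneg (hE : 0 ≤ E) (h₂ : L ^ 2 ≤ 3 * E ^ 2)
    (h₃ : 0 ≤ E ^ 3 - L ^ 2 * E + 2 * V ^ 3)
    (h₄ : 0 ≤ E ^ 4 - 2 * L ^ 2 * E ^ 2 + 8 * V ^ 3 * E + (L ^ 2) ^ 2 - 4 * A ^ 4) :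
    √(L ^ 2 - 2 * V ^ 2 + 2 * √(max (A ^ 4 - L ^ 2 * V ^ 2) 0)) ≤ E := by
  have hg : 0 ≤ E ^ 2 - L ^ 2 + 2 * V ^ 2 := by linarith [sq_le_sq_add_two_mul_sq hE h₂ h₃]
  have hsq : 4 * (A ^ 4 - L ^ 2 * V ^ 2) ≤ (E ^ 2 - L ^ 2 + 2 * V ^ 2) ^ 2 := by
    linear_combination h₄ + 4 * sq_nonneg (V * (E - V))
  have hmax : √(max (A ^ 4 - L ^ 2 * V ^ 2) 0) ≤ (E ^ 2 - L ^ 2 + 2 * V ^ 2) / 2 :=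
    (Real.sqrt_le_left (by linarith)).2 (max_le (by linarith) (sq_nonneg _))
  rw [Real.sqrt_le_left hE]
  linarith

end Quartic

theorem positive_energy_theorem_general
    (E₀ c₁ c₂ c₃ c₁' c₂' c₃' J₁ J₂ J₃ L A V : ℝ)
    (hL : L ^ 2 = ![c₁, c₂, c₃] ⬝ᵥ ![c₁, c₂, c₃]
      + ![c₁', c₂', c₃'] ⬝ᵥ ![c₁', c₂', c₃'] + ![J₁, J₂, J₃] ⬝ᵥ ![J₁, J₂, J₃])
    (hA : A ^ 4 =
        (![c₁, c₂, c₃] ⨯₃ ![c₁', c₂', c₃']) ⬝ᵥ (![c₁, c₂, c₃] ⨯₃ ![c₁', c₂', c₃'])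
      + (![c₁, c₂, c₃] ⨯₃ ![J₁, J₂, J₃]) ⬝ᵥ (![c₁, c₂, c₃] ⨯₃ ![J₁, J₂, J₃])
      + (![c₁', c₂', c₃'] ⨯₃ ![J₁, J₂, J₃]) ⬝ᵥ (![c₁', c₂', c₃'] ⨯₃ ![J₁, J₂, J₃]))
    (hV : V ^ 3 = ![c₁, c₂, c₃] ⬝ᵥ (![c₁', c₂', c₃'] ⨯₃ ![J₁, J₂, J₃]))
    (hQ : (QMatrix E₀ c₁ c₂ c₃ c₁' c₂' c₃' J₁ J₂ J₃).PosSemidef) :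
    E₀ ≥ Real.sqrt (L ^ 2 - 2 * V ^ 2 + 2 * Real.sqrt (max (A ^ 4 - L ^ 2 * V ^ 2) 0)) := by
  obtain ⟨h₁, h₂, h₃, h₄⟩ :=
    nonneg_of_posSemidef_QMatrix E₀ ![c₁, c₂, c₃] ![c₁', c₂', c₃'] ![J₁, J₂, J₃] hQ
  rw [← hL] at h₂ h₃ h₄
  rw [← hV] at h₃ h₄
  rw [← hA] at h₄
  exact sqrt_le_of_quartic_derivatives_nonneg h₁ h₂ h₃ h₄

/-- The positive energy theorem for asymptotically anti-de Sitter spacetimes: if the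
energy–momentum endomorphism `Q` is positive semidefinite, then
`E₀ ≥ √(L² − 2V² + 2·√(max{A⁴ − L²V², 0}))`. -/
theorem positive_energy_theorem
    (E₀ c₁ c₂ c₃ c₁' c₂' c₃' J₁ J₂ J₃ L A V : ℝ)
    (hL0 : 0 ≤ L)
    (hL : L ^ 2 = ![c₁, c₂, c₃] ⬝ᵥ ![c₁, c₂, c₃]
      + ![c₁', c₂', c₃'] ⬝ᵥ ![c₁', c₂', c₃'] + ![J₁, J₂, J₃] ⬝ᵥ ![J₁, J₂, J₃])
    (hA0 : 0 ≤ A)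
    (hA : A ^ 4 =
        (![c₁, c₂, c₃] ⨯₃ ![c₁', c₂', c₃']) ⬝ᵥ (![c₁, c₂, c₃] ⨯₃ ![c₁', c₂', c₃'])
      + (![c₁, c₂, c₃] ⨯₃ ![J₁, J₂, J₃]) ⬝ᵥ (![c₁, c₂, c₃] ⨯₃ ![J₁, J₂, J₃])
      + (![c₁', c₂', c₃'] ⨯₃ ![J₁, J₂, J₃]) ⬝ᵥ (![c₁', c₂', c₃'] ⨯₃ ![J₁, J₂, J₃]))
    (hV : V ^ 3 = ![c₁, c₂, c₃] ⬝ᵥ (![c₁', c₂', c₃'] ⨯₃ ![J₁, J₂, J₃]))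
    (hQ : (QMatrix E₀ c₁ c₂ c₃ c₁' c₂' c₃' J₁ J₂ J₃).PosSemidef) :
    E₀ ≥ Real.sqrt (L ^ 2 - 2 * V ^ 2 + 2 * Real.sqrt (max (A ^ 4 - L ^ 2 * V ^ 2) 0)) :=
  positive_energy_theorem_general E₀ c₁ c₂ c₃ c₁' c₂' c₃' J₁ J₂ J₃ L A V hL hA hV hQ
end

section
/- With notation as in the context, (E₀² − L²)² + 8·E₀·V³ − 4·A⁴ = k⁴·(I₁² + 2·I₂). (In the paper k = κ/(16π), the left-hand side is the determinant of the energy-momentum endomorphism Q, and this identity shows det Q is expressed through the two O(3,2) Casimir invariants of the Henneaux–Teitelboim charge matrix, hence is a geometric invariant.) -/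
/-!
Both sides are polynomials in the ten independent entries of the antisymmetric matrix `J`.
With `M = J η`, the Casimirs are traces, `I₁ = -½ tr M²` and `I₂ = ½ tr M⁴ - ¼ (tr M²)²`, so
`k⁴ (I₁² + 2 I₂) = tr N⁴ - ¼ (tr N²)²` for `N = k M`. Writing `k J` through its energy `E₀`,
the vectors `c`, `c'` and the angular momentum `𝐉`, this becomes the left-hand side on expanding.
-/

open Matrix

namespace Matrix

variable {n R : Type*} [Fintype n]

theorem sum_apply_mul_apply_eq_trace_transpose_mul [AddCommMonoid R] [Mul R]
    (A B : Matrix n n R) : ∑ a, ∑ b, A a b * B a b = trace (Aᵀ * B) := by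
  simp only [trace, diag, mul_apply, transpose_apply]
  exact Finset.sum_comm

variable [DecidableEq n] [Semiring R]

theorem sum_apply_mul_apply_swap_eq_trace_sq (M : Matrix n n R) :
    ∑ a, ∑ b, M a b * M b a = trace (M ^ 2) := by
  simp only [sq, trace, diag, mul_apply]

theorem sum_cyclic_four_eq_trace_pow_four (M : Matrix n n R) :
    ∑ a, ∑ b, ∑ c, ∑ d, M a b * M b c * M c d * M d a = trace (M ^ 4) := by
  have h : M ^ 4 = M ^ 2 * M ^ 2 := by rw [← pow_add]
  simp only [h, sq, trace, diag, mul_apply, Finset.sum_mul_sum, mul_assoc]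
  exact Finset.sum_congr rfl fun a _ => Finset.sum_comm

end Matrix

section ChargeMatrix

variable {R : Type*} [CommRing R]

def chargeMatrix (E₀ : R) (c c' j : Fin 3 → R) : Matrix (Fin 5) (Fin 5) R :=
  !![0, -c' 0, -c' 1, -c' 2, -E₀;
     c' 0, 0, j 2, -j 1, c 0;
     c' 1, -j 2, 0, j 0, c 1;
     c' 2, j 1, -j 0, 0, c 2;
     E₀, -c 0, -c 1, -c 2, 0]

theorem eq_chargeMatrix_of_transpose_eq_neg [IsAddTorsionFree R] {K : Matrix (Fin 5) (Fin 5) R}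
    (hK : Kᵀ = -K) :
    K = chargeMatrix (K 4 0) ![K 1 4, K 2 4, K 3 4] ![K 1 0, K 2 0, K 3 0]
      ![K 2 3, K 3 1, K 1 2] := by
  have hskew : ∀ a b, K b a = -K a b := fun a b => by
    simpa using congrFun (congrFun hK a) b
  have hdiag : ∀ a, K a a = 0 := fun a => self_eq_neg.mp (hskew a a)
  ext a b
  fin_cases a <;> fin_cases b <;> simp [chargeMatrix, hdiag] <;> exact hskew _ _

theorem smul_chargeMatrix (k E₀ : R) (c c' j : Fin 3 → R) :
    k • chargeMatrix E₀ c c' j = chargeMatrix (k * E₀) (k • c) (k • c') (k • j) := by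
  ext a b
  fin_cases a <;> fin_cases b <;> simp [chargeMatrix]

theorem four_mul_trace_pow_four_sub_sq_chargeMatrix (E₀ : R) (c c' j : Fin 3 → R) :
    4 * trace ((chargeMatrix E₀ c c' j * diagonal ![-1, 1, 1, 1, -1]) ^ 4)
        - trace ((chargeMatrix E₀ c c' j * diagonal ![-1, 1, 1, 1, -1]) ^ 2) ^ 2 =
      4 * ((E₀ ^ 2 - (c ⬝ᵥ c + c' ⬝ᵥ c' + j ⬝ᵥ j)) ^ 2 + 8 * E₀ * (c ⬝ᵥ (c' ⨯₃ j))
        - 4 * ((c ⨯₃ c') ⬝ᵥ (c ⨯₃ c') + (c ⨯₃ j) ⬝ᵥ (c ⨯₃ j) + (c' ⨯₃ j) ⬝ᵥ (c' ⨯₃ j))) := by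
  simp only [pow_succ, pow_zero, chargeMatrix, trace, diag, mul_apply,
    Fin.sum_univ_five, diagonal_apply, dotProduct, crossProduct, Fin.sum_univ_three,
    Fin.isValue, of_apply, cons_val', cons_val_zero, cons_val_fin_one, ↓reduceIte,
    Nat.succ_eq_add_one, Nat.reduceAdd, mul_neg, mul_one, neg_zero, cons_val_one, one_ne_zero,
    mul_zero, add_zero, cons_val, Fin.reduceEq, zero_ne_one, zero_add, neg_mul, neg_neg,
    zero_mul, one_mul, LinearMap.mk₂_apply]
  ring

end ChargeMatrix

theorem detQ_eq_casimir_general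
    (J : Matrix (Fin 5) (Fin 5) ℝ) (hJ : Jᵀ = -J)
    (η : Matrix (Fin 5) (Fin 5) ℝ)
    (hη : η = Matrix.diagonal ![-1, 1, 1, 1, -1])
    (k : ℝ)
    (I₁ I₂ : ℝ)
    (hI₁ : I₁ = (1 / 2) * ∑ a : Fin 5, ∑ b : Fin 5, J a b * (η * J * η) a b)
    (hI₂ : I₂ = (1 / 2) * ∑ a : Fin 5, ∑ b : Fin 5, ∑ c : Fin 5, ∑ d : Fin 5,
          (J * η) a b * (J * η) b c * (J * η) c d * (J * η) d a
        - (1 / 4) * (∑ a : Fin 5, ∑ b : Fin 5, (J * η) a b * (J * η) b a) ^ 2)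
    (E₀ : ℝ) (hE₀ : E₀ = k * J 4 0)
    (c c' Jv : Fin 3 → ℝ)
    (hc : c = k • ![J 1 4, J 2 4, J 3 4])
    (hc' : c' = k • ![J 1 0, J 2 0, J 3 0])
    (hJv : Jv = k • ![J 2 3, J 3 1, J 1 2])
    (L2 A4 V3 : ℝ)
    (hL2 : L2 = c ⬝ᵥ c + c' ⬝ᵥ c' + Jv ⬝ᵥ Jv)
    (hA4 : A4 = (c ⨯₃ c') ⬝ᵥ (c ⨯₃ c') + (c ⨯₃ Jv) ⬝ᵥ (c ⨯₃ Jv) + (c' ⨯₃ Jv) ⬝ᵥ (c' ⨯₃ Jv))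
    (hV3 : V3 = c ⬝ᵥ (c' ⨯₃ Jv)) :
    (E₀ ^ 2 - L2) ^ 2 + 8 * E₀ * V3 - 4 * A4 = k ^ 4 * (I₁ ^ 2 + 2 * I₂) := by
  have hI₁' : I₁ = -(1 / 2) * trace ((J * η) ^ 2) := by
    rw [hI₁, sum_apply_mul_apply_eq_trace_transpose_mul, hJ, Matrix.neg_mul, trace_neg, sq]
    simp only [Matrix.mul_assoc]
    ring
  rw [sum_cyclic_four_eq_trace_pow_four, sum_apply_mul_apply_swap_eq_trace_sq] at hI₂
  have hK : k • J = chargeMatrix E₀ c c' Jv := by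
    rw [eq_chargeMatrix_of_transpose_eq_neg hJ, smul_chargeMatrix, hE₀, hc, hc', hJv]
  have key := four_mul_trace_pow_four_sub_sq_chargeMatrix E₀ c c' Jv
  rw [← hK, ← hη, Matrix.smul_mul, smul_pow, smul_pow, trace_smul, trace_smul, smul_eq_mul,
    smul_eq_mul, ← hL2, ← hA4, ← hV3] at key
  rw [hI₁', hI₂]
  linear_combination -key / 4

/-- `det Q` is expressed through the two `O(3,2)` Casimir invariants of the
Henneaux–Teitelboim charge matrix:
`(E₀² − L²)² + 8·E₀·V³ − 4·A⁴ = k⁴·(I₁² + 2·I₂)`. -/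
theorem detQ_eq_casimir
    (J : Matrix (Fin 5) (Fin 5) ℝ) (hJ : Jᵀ = -J)
    (η : Matrix (Fin 5) (Fin 5) ℝ)
    (hη : η = Matrix.diagonal ![-1, 1, 1, 1, -1])
    (k : ℝ) (hk : 0 < k)
    (I₁ I₂ : ℝ)
    (hI₁ : I₁ = (1 / 2) * ∑ a : Fin 5, ∑ b : Fin 5, J a b * (η * J * η) a b)
    (hI₂ : I₂ = (1 / 2) * ∑ a : Fin 5, ∑ b : Fin 5, ∑ c : Fin 5, ∑ d : Fin 5,
          (J * η) a b * (J * η) b c * (J * η) c d * (J * η) d a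
        - (1 / 4) * (∑ a : Fin 5, ∑ b : Fin 5, (J * η) a b * (J * η) b a) ^ 2)
    (E₀ : ℝ) (hE₀ : E₀ = k * J 4 0)
    (c c' Jv : Fin 3 → ℝ)
    (hc : c = k • ![J 1 4, J 2 4, J 3 4])
    (hc' : c' = k • ![J 1 0, J 2 0, J 3 0])
    (hJv : Jv = k • ![J 2 3, J 3 1, J 1 2])
    (L2 A4 V3 : ℝ)
    (hL2 : L2 = c ⬝ᵥ c + c' ⬝ᵥ c' + Jv ⬝ᵥ Jv)
    (hA4 : A4 = (c ⨯₃ c') ⬝ᵥ (c ⨯₃ c') + (c ⨯₃ Jv) ⬝ᵥ (c ⨯₃ Jv) + (c' ⨯₃ Jv) ⬝ᵥ (c' ⨯₃ Jv))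
    (hV3 : V3 = c ⬝ᵥ (c' ⨯₃ Jv)) :
    (E₀ ^ 2 - L2) ^ 2 + 8 * E₀ * V3 - 4 * A4 = k ^ 4 * (I₁ ^ 2 + 2 * I₂) :=
  detQ_eq_casimir_general J hJ η hη k I₁ I₂ hI₁ hI₂ E₀ hE₀ c c' Jv hc hc' hJv L2 A4 V3 hL2 hA4 hV3
end
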